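/- arXiv:1211.3360 — 7 statements merged into one kernel-verified Lean document; each statement's English description precedes it below -/
import Mathlib

section
/- Let {f_i}_{i∈I} be a frame for a Hilbert space H with frame operator S, and let P be an orthogonal projection on H. Then {P f_i}_{i∈I} is a tight frame for the subspace PH with frame bound α > 0 if and only if P S P = α P. -/
/-!
For `f = P g` in `PH` one has `⟪P fᵢ, f⟫ = ⟪fᵢ, f⟫`, and the expansion `S f = ∑ ⟪fᵢ, f⟫ fᵢ`
gives `⟪f, S f⟫ = ∑ |⟪fᵢ, f⟫|²`. So the tight-frame condition says that `S` and `α • 1` have the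
same quadratic form on `PH`. Since `α P = P (α • 1) P`, and on a complex Hilbert space an operator
is determined by its quadratic form, this is equivalent to `P S P = α P`.
-/

open scoped InnerProductSpace ComplexConjugate

theorem HasSum.inner_eq_tsum_norm_inner_sq {𝕜 E ι : Type*} [RCLike 𝕜] [NormedAddCommGroup E]
    [InnerProductSpace 𝕜 E] {v : ι → E} {f g : E}
    (h : HasSum (fun i => ⟪v i, f⟫_𝕜 • v i) g) :
    ⟪f, g⟫_𝕜 = ((∑' i, ‖⟪v i, f⟫_𝕜‖ ^ 2 : ℝ) : 𝕜) := by
  have hterm : ∀ i, ⟪f, ⟪v i, f⟫_𝕜 • v i⟫_𝕜 = ((‖⟪v i, f⟫_𝕜‖ ^ 2 : ℝ) : 𝕜) := fun i => by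
    rw [inner_smul_right, ← inner_conj_symm (v i) f, RCLike.conj_mul, RCLike.norm_conj,
      RCLike.ofReal_pow]
  have hsum : HasSum (fun i => ((‖⟪v i, f⟫_𝕜‖ ^ 2 : ℝ) : 𝕜)) ⟪f, g⟫_𝕜 := by
    simpa only [innerSL_apply_apply, hterm] using h.mapL (innerSL 𝕜 f)
  rw [RCLike.ofReal_tsum, hsum.tsum_eq]

theorem ContinuousLinearMap.comp_comp_eq_comp_comp_iff {H : Type*} [NormedAddCommGroup H]
    [InnerProductSpace ℂ H] [CompleteSpace H] {P : H →L[ℂ] H} (hP : IsSelfAdjoint P)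
    (A B : H →L[ℂ] H) :
    P ∘L A ∘L P = P ∘L B ∘L P ↔
      ∀ x ∈ LinearMap.range (P : H →ₗ[ℂ] H), ⟪x, A x⟫_ℂ = ⟪x, B x⟫_ℂ := by
  have hcompress : ∀ (T : H →L[ℂ] H) g, ⟪(P ∘L T ∘L P) g, g⟫_ℂ = conj ⟪P g, T (P g)⟫_ℂ :=
    fun T g => by
      rw [comp_apply, comp_apply, ← adjoint_inner_right, hP.adjoint_eq, inner_conj_symm]
  rw [← ContinuousLinearMap.coe_inj, ← ext_inner_map]
  simp only [ContinuousLinearMap.coe_coe, hcompress, (RingHom.injective _).eq_iff,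
    LinearMap.mem_range, forall_exists_index, forall_apply_eq_imp_iff]

theorem projected_tight_frame_iff_PSP_eq_alphaP_general
    {H : Type*} [NormedAddCommGroup H] [InnerProductSpace ℂ H] [CompleteSpace H]
    {I : Type*} (v : I → H)
    (S : H →L[ℂ] H) (hS : ∀ f : H, HasSum (fun i => (inner ℂ (v i) f : ℂ) • v i) (S f))
    (P : H →L[ℂ] H) (hP : IsIdempotentElem P) (hPsa : IsSelfAdjoint P)
    (α : ℝ) :
    (∀ f ∈ LinearMap.range (P : H →ₗ[ℂ] H), ∑' i, ‖(inner ℂ (P (v i)) f : ℂ)‖ ^ 2 = α * ‖f‖ ^ 2) ↔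
      P ∘L S ∘L P = (α : ℂ) • P := by
  have hPP : ∀ x, P (P x) = P x := fun x => DFunLike.congr_fun hP x
  have hαP : (α : ℂ) • P = P ∘L ((α : ℂ) • 1) ∘L P := by
    ext x
    simp [hPP]
  rw [hαP, ContinuousLinearMap.comp_comp_eq_comp_comp_iff hPsa]
  refine forall₂_congr fun x hx => ?_
  obtain ⟨y, rfl⟩ := hx
  have hproj : ∀ i, ⟪P (v i), P y⟫_ℂ = ⟪v i, P y⟫_ℂ := fun i => by
    rw [← ContinuousLinearMap.adjoint_inner_right, hPsa.adjoint_eq, hPP]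
  rw [(hS _).inner_eq_tsum_norm_inner_sq, smul_apply, one_apply_eq_self, inner_smul_right,
    inner_self_eq_norm_sq_to_K]
  simp only [ContinuousLinearMap.coe_coe, hproj, RCLike.ofReal_eq_complex_ofReal]
  norm_cast

/-- For a frame with frame operator `S` and a projection `P`, the projected sequence is
a tight frame for the range of `P` with bound `α > 0` iff `P S P = α P`. -/
theorem projected_tight_frame_iff_PSP_eq_alphaP
    {H : Type*} [NormedAddCommGroup H] [InnerProductSpace ℂ H] [CompleteSpace H]
    {I : Type*} (v : I → H) (A B : ℝ) (hA : 0 < A) (hAB : A ≤ B)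
    (hframe : ∀ f : H,
      A * ‖f‖ ^ 2 ≤ ∑' i, ‖(inner ℂ (v i) f : ℂ)‖ ^ 2 ∧
      ∑' i, ‖(inner ℂ (v i) f : ℂ)‖ ^ 2 ≤ B * ‖f‖ ^ 2)
    (S : H →L[ℂ] H) (hS : ∀ f : H, HasSum (fun i => (inner ℂ (v i) f : ℂ) • v i) (S f))
    (P : H →L[ℂ] H) (hP : IsIdempotentElem P) (hPsa : IsSelfAdjoint P)
    (α : ℝ) (hα : 0 < α) :
    (∀ f ∈ LinearMap.range (P : H →ₗ[ℂ] H), ∑' i, ‖(inner ℂ (P (v i)) f : ℂ)‖ ^ 2 = α * ‖f‖ ^ 2) ↔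
      P ∘L S ∘L P = (α : ℂ) • P :=
  projected_tight_frame_iff_PSP_eq_alphaP_general v S hS P hP hPsa α
end

section
/- Let E be a bounded positive diagonalizable operator on a separable infinite dimensional Hilbert space with an orthonormal basis of eigenvectors having eigenvalues {λ_i}_{i∈ℕ}. Suppose there exists α > 0 such that both {i : λ_i < α} and {i : λ_i ≥ α} are infinite. Then there exists an orthogonal projection P onto an infinite dimensional subspace such that P E P = α P. -/
/-!
Pair each index `a k` with eigenvalue `λ_{a k} < α` with an index `b k` with `λ_{b k} ≥ α`,
all indices distinct. Since `α` lies between the two eigenvalues, a unit vector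
`f k = c_k e_{a k} + s_k e_{b k}` has Rayleigh quotient `c_k² λ_{a k} + s_k² λ_{b k} = α` for
suitable `c_k, s_k`. The `f k` are orthonormal, `E f k` stays in the span of `e_{a k}, e_{b k}`,
so `⟪f j, E f k⟫ = α ⟪f j, f k⟫` for all `j, k`. Hence `E v - α v ⊥ K` for every `v` in the
closed span `K` of the `f k`, which says exactly that the projection `P` onto `K` satisfies
`P E P = α P`.
-/

open Submodule
open scoped InnerProductSpace ComplexConjugate

section

variable {𝕜 H : Type*} [RCLike 𝕜] [NormedAddCommGroup H] [InnerProductSpace 𝕜 H]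

theorem Submodule.starProjection_comp_comp_starProjection_eq_smul (K : Submodule 𝕜 H)
    [K.HasOrthogonalProjection] (T : H →L[𝕜] H) (c : 𝕜) (h : ∀ v ∈ K, T v - c • v ∈ Kᗮ) :
    K.starProjection ∘L T ∘L K.starProjection = c • K.starProjection := by
  ext x
  have hx : K.starProjection x ∈ K := by simp
  have := (K.starProjection_apply_eq_zero_iff).mpr (h _ hx)
  rwa [map_sub, map_smul, starProjection_eq_self_iff.mpr hx, sub_eq_zero] at this

theorem sub_smul_mem_orthogonal_topologicalClosure_span {ι : Type*} (f : ι → H) (T : H →L[𝕜] H)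
    (c : 𝕜) (h : ∀ j k, ⟪f j, T (f k)⟫_𝕜 = c * ⟪f j, f k⟫_𝕜) :
    ∀ v ∈ (span 𝕜 (Set.range f)).topologicalClosure,
      T v - c • v ∈ (span 𝕜 (Set.range f)).topologicalClosureᗮ := by
  rw [orthogonal_closure]
  intro v hv
  change v ∈ (span 𝕜 (Set.range f))ᗮ.comap (T - c • ContinuousLinearMap.id 𝕜 H).toLinearMap
  refine topologicalClosure_minimal _ (span_le.mpr ?_)
    ((isClosed_orthogonal _).preimage (T - c • ContinuousLinearMap.id 𝕜 H).continuous) hv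
  rintro _ ⟨k, rfl⟩
  have : span 𝕜 (Set.range f) ⟂ span 𝕜 {T (f k) - c • f k} := isOrtho_span.mpr <| by
    rintro _ ⟨j, rfl⟩ _ rfl
    rw [inner_sub_right, inner_smul_right, h, sub_self]
  exact this.symm.le (mem_span_singleton_self _)

theorem Orthonormal.exists_projection_comp_comp_eq_smul [CompleteSpace H] {ι : Type*}
    [Infinite ι] {f : ι → H} (hf : Orthonormal 𝕜 f) (T : H →L[𝕜] H) (c : 𝕜)
    (h : ∀ j k, ⟪f j, T (f k)⟫_𝕜 = c * ⟪f j, f k⟫_𝕜) :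
    ∃ P : H →L[𝕜] H, IsIdempotentElem P ∧ IsSelfAdjoint P ∧
      ¬ FiniteDimensional 𝕜 (LinearMap.range (P : H →ₗ[𝕜] H)) ∧ P ∘L T ∘L P = c • P := by
  set K := (span 𝕜 (Set.range f)).topologicalClosure
  have hfK (k : ι) : f k ∈ K := le_topologicalClosure _ (subset_span ⟨k, rfl⟩)
  refine ⟨K.starProjection, K.isIdempotentElem_starProjection, isSelfAdjoint_starProjection K,
    fun hfin => ?_, K.starProjection_comp_comp_starProjection_eq_smul T c
      (sub_smul_mem_orthogonal_topologicalClosure_span f T c h)⟩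
  rw [range_starProjection] at hfin
  exact Module.Finite.not_linearIndependent_of_infinite (fun k => (⟨f k, hfK k⟩ : K))
    (.of_comp K.subtype hf.linearIndependent)

theorem Orthonormal.inner_smul_add_smul_eq_ite {ι κ : Type*} [DecidableEq κ] {e : ι → H}
    (he : Orthonormal 𝕜 e) {a b : κ → ι} (hab : Function.Injective (Sum.elim a b))
    (x y x' y' : 𝕜) (j k : κ) :
    ⟪x • e (a j) + y • e (b j), x' • e (a k) + y' • e (b k)⟫_𝕜 =
      if j = k then conj x * x' + conj y * y' else 0 := by
  have h := orthonormal_iff_ite.mp (he.comp _ hab)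
  have haa : ⟪e (a j), e (a k)⟫_𝕜 = if j = k then 1 else 0 := by simpa using h (.inl j) (.inl k)
  have hbb : ⟪e (b j), e (b k)⟫_𝕜 = if j = k then 1 else 0 := by simpa using h (.inr j) (.inr k)
  have hab' : ⟪e (a j), e (b k)⟫_𝕜 = 0 := by simpa using h (.inl j) (.inr k)
  have hba' : ⟪e (b j), e (a k)⟫_𝕜 = 0 := by simpa using h (.inr j) (.inl k)
  simp only [inner_add_left, inner_add_right, inner_smul_left, inner_smul_right, haa, hbb, hab',
    hba']
  split_ifs <;> ring

theorem exists_sq_add_sq_eq_one_and_sq_mul_add_sq_mul_eq {μ ν α : ℝ} (h : α ∈ Set.Icc μ ν) :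
    ∃ c s : ℝ, c ^ 2 + s ^ 2 = 1 ∧ c ^ 2 * μ + s ^ 2 * ν = α := by
  rw [← segment_eq_Icc (h.1.trans h.2)] at h
  obtain ⟨p, q, hp, hq, hpq, rfl⟩ := h
  exact ⟨√p, √q, by rw [Real.sq_sqrt hp, Real.sq_sqrt hq, hpq],
    by rw [Real.sq_sqrt hp, Real.sq_sqrt hq, smul_eq_mul, smul_eq_mul]⟩

theorem Orthonormal.exists_orthonormal_inner_apply_eq_mul_inner {ι κ : Type*} {e : ι → H}
    (he : Orthonormal 𝕜 e) {E : H →L[𝕜] H} {lam : ι → ℝ} (heig : ∀ i, E (e i) = (lam i : 𝕜) • e i)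
    {a b : κ → ι} (hab : Function.Injective (Sum.elim a b)) {α : ℝ}
    (hα : ∀ k, α ∈ Set.Icc (lam (a k)) (lam (b k))) :
    ∃ f : κ → H, Orthonormal 𝕜 f ∧ ∀ j k, ⟪f j, E (f k)⟫_𝕜 = α * ⟪f j, f k⟫_𝕜 := by
  classical
  choose c s hcs hcsα using fun k => exists_sq_add_sq_eq_one_and_sq_mul_add_sq_mul_eq (hα k)
  set f : κ → H := fun k => (c k : 𝕜) • e (a k) + (s k : 𝕜) • e (b k)
  have hEf (k : κ) :
      E (f k) = ((c k * lam (a k) : ℝ) : 𝕜) • e (a k) + ((s k * lam (b k) : ℝ) : 𝕜) • e (b k) := by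
    simp only [f, map_add, map_smul, heig, smul_smul, RCLike.ofReal_mul]
  have hf : Orthonormal 𝕜 f := orthonormal_iff_ite.mpr fun j k => by
    rw [he.inner_smul_add_smul_eq_ite hab]
    split_ifs with hjk
    · subst hjk
      simp only [RCLike.conj_ofReal, ← sq]
      exact_mod_cast hcs j
    · rfl
  refine ⟨f, hf, fun j k => ?_⟩
  rw [orthonormal_iff_ite.mp hf, hEf, he.inner_smul_add_smul_eq_ite hab]
  split_ifs with hjk
  · subst hjk
    rw [mul_one, ← hcsα j]
    simp only [RCLike.conj_ofReal]
    push_cast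
    ring
  · simp

end

theorem diagonalizable_positive_compression_general
    {H : Type*} [NormedAddCommGroup H] [InnerProductSpace ℂ H] [CompleteSpace H]
    (E : H →L[ℂ] H)
    (e : ℕ → H) (he : Orthonormal ℂ e)
    (lam : ℕ → ℝ) (heig : ∀ i, E (e i) = (lam i : ℂ) • e i)
    (α : ℝ)
    (hlt : {i | lam i < α}.Infinite) (hge : {i | α ≤ lam i}.Infinite) :
    ∃ P : H →L[ℂ] H, IsIdempotentElem P ∧ IsSelfAdjoint P ∧
      ¬ FiniteDimensional ℂ (LinearMap.range (P : H →ₗ[ℂ] H)) ∧ P ∘L E ∘L P = (α : ℂ) • P := by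
  set A := Set.Infinite.natEmbedding _ hlt
  set B := Set.Infinite.natEmbedding _ hge
  let a : ℕ → ℕ := fun k => A k
  let b : ℕ → ℕ := fun k => B k
  have ha (k : ℕ) : lam (a k) < α := (A k).2
  have hb (k : ℕ) : α ≤ lam (b k) := (B k).2
  have hab : Function.Injective (Sum.elim a b) :=
    (Subtype.val_injective.comp A.injective).sumElim (Subtype.val_injective.comp B.injective)
      fun i j hij => (ha i).not_ge ((hb j).trans_eq (congrArg lam hij.symm))
  obtain ⟨f, hf, hEf⟩ := he.exists_orthonormal_inner_apply_eq_mul_inner heig hab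
    fun k => ⟨(ha k).le, hb k⟩
  exact hf.exists_projection_comp_comp_eq_smul E α hEf

/-- If a positive diagonalizable operator has infinitely many eigenvalues `< α` and
infinitely many eigenvalues `≥ α` for some `α > 0`, then it can be compressed to
`α` times a projection of infinite rank. -/
theorem diagonalizable_positive_compression
    {H : Type*} [NormedAddCommGroup H] [InnerProductSpace ℂ H] [CompleteSpace H]
    (E : H →L[ℂ] H) (hpos : E.IsPositive)
    (e : ℕ → H) (he : Orthonormal ℂ e)
    (hspan : (Submodule.span ℂ (Set.range e)).topologicalClosure = ⊤)
    (lam : ℕ → ℝ) (hnn : ∀ i, 0 ≤ lam i) (heig : ∀ i, E (e i) = (lam i : ℂ) • e i)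
    (α : ℝ) (hα : 0 < α)
    (hlt : {i | lam i < α}.Infinite) (hge : {i | α ≤ lam i}.Infinite) :
    ∃ P : H →L[ℂ] H, IsIdempotentElem P ∧ IsSelfAdjoint P ∧
      ¬ FiniteDimensional ℂ (LinearMap.range (P : H →ₗ[ℂ] H)) ∧ P ∘L E ∘L P = (α : ℂ) • P :=
  diagonalizable_positive_compression_general E e he lam heig α hlt hge
end

section
/- Let P and K be bounded operators on an infinite dimensional Hilbert space, where P is an orthogonal projection and K is a positive operator with finite dimensional kernel. If P K P has finite rank, then P has finite rank. -/
/-!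
A positive operator vanishes wherever its quadratic form does, since `K = S† S` gives
`⟪K x, x⟫ = ‖S x‖²`. For `x` in the range of `P` we have `⟪P K P x, x⟫ = ⟪K x, x⟫`, so the kernel of
`P K P` meets the range of `P` inside `ker K`. Hence the range of `P` is finite dimensional: both
its image under `P K P` and its intersection with the kernel of `P K P` are.
-/

open scoped InnerProductSpace

namespace ContinuousLinearMap

variable {E H : Type*} [NormedAddCommGroup H] [InnerProductSpace ℂ H] [CompleteSpace H]
  [NormedAddCommGroup E] [InnerProductSpace ℂ E] [CompleteSpace E]

theorem IsPositive.apply_eq_zero_iff_inner_apply_self_eq_zero {K : H →L[ℂ] H}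
    (hK : K.IsPositive) (x : H) : K x = 0 ↔ ⟪K x, x⟫_ℂ = 0 := by
  refine ⟨fun h ↦ by rw [h, inner_zero_left], fun h ↦ ?_⟩
  obtain ⟨S, rfl⟩ := CStarAlgebra.nonneg_iff_eq_star_mul_self.mp ((nonneg_iff_isPositive K).mpr hK)
  have hSx : S x = 0 := by
    rwa [star_eq_adjoint, mul_apply_eq_comp, adjoint_inner_left, inner_self_eq_zero] at h
  rw [mul_apply_eq_comp, hSx, map_zero]

theorem IsPositive.ker_adjoint_comp_comp {K : H →L[ℂ] H} (hK : K.IsPositive) (S : E →L[ℂ] H) :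
    LinearMap.ker ((adjoint S ∘L K ∘L S : E →L[ℂ] E) : E →ₗ[ℂ] E) =
      LinearMap.ker ((K ∘L S : E →L[ℂ] H) : E →ₗ[ℂ] H) := by
  ext x
  simp only [LinearMap.mem_ker, coe_coe, comp_apply]
  refine ⟨fun h ↦ ?_, fun h ↦ by rw [h, map_zero]⟩
  rw [hK.apply_eq_zero_iff_inner_apply_self_eq_zero, ← adjoint_inner_left, h, inner_zero_left]

end ContinuousLinearMap

theorem finite_rank_of_compression_finite_rank_general
    {H : Type*} [NormedAddCommGroup H] [InnerProductSpace ℂ H] [CompleteSpace H]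
    (P K : H →L[ℂ] H) (hP : IsIdempotentElem P) (hPsa : IsSelfAdjoint P)
    (hKpos : K.IsPositive) (hker : FiniteDimensional ℂ (LinearMap.ker (K : H →ₗ[ℂ] H)))
    (hfr : FiniteDimensional ℂ (LinearMap.range ((P ∘L K ∘L P : H →L[ℂ] H) : H →ₗ[ℂ] H))) :
    FiniteDimensional ℂ (LinearMap.range (P : H →ₗ[ℂ] H)) := by
  set T : H →ₗ[ℂ] H := ↑(P ∘L K ∘L P)
  have hkerT : LinearMap.ker T = LinearMap.ker ((K ∘L P : H →L[ℂ] H) : H →ₗ[ℂ] H) := by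
    simpa only [hPsa.adjoint_eq] using hKpos.ker_adjoint_comp_comp P
  have hinf : LinearMap.range (P : H →ₗ[ℂ] H) ⊓ LinearMap.ker T ≤
      LinearMap.ker (K : H →ₗ[ℂ] H) := by
    intro x hx
    obtain ⟨⟨y, rfl⟩, hy⟩ := Submodule.mem_inf.mp hx
    rw [hkerT, LinearMap.mem_ker] at hy
    have hPy : P (P y) = P y := by rw [← mul_apply_eq_comp, hP.eq]
    simpa [hPy] using hy
  rw [← Submodule.fg_iff_finiteDimensional] at *
  exact Submodule.fg_of_fg_map_of_fg_inf_ker T (hfr.of_le LinearMap.map_le_range) (hker.of_le hinf)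

/-- If `K` is positive with finite dimensional kernel and `P` is a projection such that
`P K P` has finite rank, then `P` has finite rank. -/
theorem finite_rank_of_compression_finite_rank
    {H : Type*} [NormedAddCommGroup H] [InnerProductSpace ℂ H] [CompleteSpace H]
    (hinf : ¬ FiniteDimensional ℂ H)
    (P K : H →L[ℂ] H) (hP : IsIdempotentElem P) (hPsa : IsSelfAdjoint P)
    (hKpos : K.IsPositive) (hker : FiniteDimensional ℂ (LinearMap.ker (K : H →ₗ[ℂ] H)))
    (hfr : FiniteDimensional ℂ (LinearMap.range ((P ∘L K ∘L P : H →L[ℂ] H) : H →ₗ[ℂ] H))) :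
    FiniteDimensional ℂ (LinearMap.range (P : H →ₗ[ℂ] H)) :=
  finite_rank_of_compression_finite_rank_general P K hP hPsa hKpos hker hfr
end

section
/- Let H be an infinite dimensional Hilbert space with orthonormal basis {e_n}_{n≥1}, and let φ_n = (2 − 1/n)^{1/2} e_n. Then {φ_n} is a frame for H, and there is no orthogonal projection P onto an infinite dimensional subspace H₀ such that {P φ_n} is a tight frame for H₀. -/
/-!
With `w n = 2 - 1/(n+1)` we have `|⟪φ n, f⟫|² = w n |⟪e n, f⟫|²`, so `1 ≤ w n ≤ 2` gives the frame
bounds by Parseval. If `P` projects onto `H₀` and `{P φ n}` were `α`-tight on `H₀`, then, since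
`⟪P φ n, f⟫ = ⟪φ n, f⟫` for `f ∈ H₀`, every `f ∈ H₀` would satisfy `∑ (w n - α) |⟪e n, f⟫|² = 0`.
If `α ≥ 2` all weights `w n - α` are negative, forcing `H₀ = 0`. If `α < 2` they are positive
outside a finite set `S` of indices, and the infinite dimensional `H₀` contains some `f ≠ 0`
orthogonal to all `e n` with `n ∈ S`; for it the sum is a sum of nonnegative terms that vanishes
only if `f = 0`.
-/

open Filter Topology

section

variable {𝕜 E : Type*} [RCLike 𝕜] [NormedAddCommGroup E] [InnerProductSpace 𝕜 E]

local notation "⟪" x ", " y "⟫" => inner 𝕜 x y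

theorem norm_inner_ofReal_sqrt_smul_left_sq {w : ℝ} (hw : 0 ≤ w) (v f : E) :
    ‖⟪((√w : ℝ) : 𝕜) • v, f⟫‖ ^ 2 = w * ‖⟪v, f⟫‖ ^ 2 := by
  rw [inner_smul_left, RCLike.conj_ofReal, norm_mul, mul_pow, RCLike.norm_ofReal, sq_abs,
    Real.sq_sqrt hw]

theorem IsStarProjection.inner_apply_left_of_mem_range [CompleteSpace E] {P : E →L[𝕜] E}
    (hP : IsStarProjection P) (x : E) {f : E} (hf : f ∈ LinearMap.range (P : E →ₗ[𝕜] E)) :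
    ⟪P x, f⟫ = ⟪x, f⟫ := by
  have hPf : P f = f :=
    LinearMap.IsIdempotentElem.mem_range_iff
      (ContinuousLinearMap.IsIdempotentElem.toLinearMap hP.isIdempotentElem) |>.1 hf
  calc ⟪P x, f⟫ = ⟪x, P f⟫ := hP.isSelfAdjoint.isSymmetric x f
    _ = ⟪x, f⟫ := by rw [hPf]

theorem Submodule.exists_ne_zero_forall_inner_eq_zero {ι : Type*} [Finite ι] {K : Submodule 𝕜 E}
    (hK : ¬FiniteDimensional 𝕜 K) (v : ι → E) : ∃ f ∈ K, f ≠ 0 ∧ ∀ i, ⟪v i, f⟫ = 0 := by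
  let coeffs : K →ₗ[𝕜] ι → 𝕜 := LinearMap.pi fun i => (innerₛₗ 𝕜 (v i)).comp K.subtype
  have hker : LinearMap.ker coeffs ≠ ⊥ := fun h =>
    hK (Module.Finite.of_injective coeffs (LinearMap.ker_eq_bot.1 h))
  obtain ⟨f, hf, hf0⟩ := Submodule.exists_mem_ne_zero_of_ne_bot hker
  exact ⟨f, f.2, by simpa using hf0, fun i => congrFun (LinearMap.mem_ker.1 hf) i⟩

namespace HilbertBasis

variable {ι : Type*} (b : HilbertBasis ι 𝕜 E)

theorem hasSum_norm_sq_inner (f : E) : HasSum (fun i => ‖⟪b i, f⟫‖ ^ 2) (‖f‖ ^ 2) := by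
  have h := b.hasSum_inner_mul_inner f f
  have hterm : ∀ i, ⟪f, b i⟫ * ⟪b i, f⟫ = ((‖⟪b i, f⟫‖ ^ 2 : ℝ) : 𝕜) := fun i => by
    rw [← inner_conj_symm f (b i), RCLike.conj_mul, RCLike.ofReal_pow]
  simp only [hterm, inner_self_eq_norm_sq_to_K] at h
  exact_mod_cast h

theorem summable_mul_norm_sq_inner {w : ι → ℝ} {B : ℝ} (hw : ∀ i, 0 ≤ w i) (hB : ∀ i, w i ≤ B)
    (f : E) : Summable fun i => w i * ‖⟪b i, f⟫‖ ^ 2 :=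
  (b.hasSum_norm_sq_inner f).summable.mul_left B |>.of_nonneg_of_le
    (fun i => by have := hw i; positivity) fun i => by gcongr; exact hB i

theorem tsum_mul_norm_sq_inner_mem_Icc {w : ι → ℝ} {A B : ℝ} (hA0 : 0 ≤ A) (hA : ∀ i, A ≤ w i)
    (hB : ∀ i, w i ≤ B) (f : E) :
    ∑' i, w i * ‖⟪b i, f⟫‖ ^ 2 ∈ Set.Icc (A * ‖f‖ ^ 2) (B * ‖f‖ ^ 2) := by
  have hp := b.hasSum_norm_sq_inner f
  have hs := b.summable_mul_norm_sq_inner (fun i => hA0.trans (hA i)) hB f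
  rw [← hp.tsum_eq, ← tsum_mul_left, ← tsum_mul_left]
  exact ⟨(hp.summable.mul_left A).tsum_le_tsum (fun i => by gcongr; exact hA i) hs,
    hs.tsum_le_tsum (fun i => by gcongr; exact hB i) (hp.summable.mul_left B)⟩

theorem eq_zero_of_hasSum_mul_norm_sq_inner {d : ι → ℝ} {f : E}
    (hd : ∀ i, ⟪b i, f⟫ ≠ 0 → 0 < d i) (h : HasSum (fun i => d i * ‖⟪b i, f⟫‖ ^ 2) 0) :
    f = 0 := by
  have hnonneg : ∀ i, 0 ≤ d i * ‖⟪b i, f⟫‖ ^ 2 := fun i => by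
    by_cases hi : ⟪b i, f⟫ = 0
    · simp [hi]
    · have := hd i hi; positivity
  have hzero := (hasSum_zero_iff_of_nonneg hnonneg).1 h
  have hcoeff : ∀ i, ⟪b i, f⟫ = 0 := fun i => by
    by_contra hi
    simpa [(hd i hi).ne', hi] using congrFun hzero i
  rw [← b.repr.map_eq_zero_iff]
  ext i
  simpa [b.repr_apply_apply] using hcoeff i

theorem not_forall_hasSum_mul_norm_sq_inner {w : ι → ℝ} {L : ℝ} (hlt : ∀ i, w i < L)
    (hlim : Tendsto w cofinite (𝓝 L)) {K : Submodule 𝕜 E} (hK : ¬FiniteDimensional 𝕜 K) (α : ℝ) :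
    ¬∀ f ∈ K, HasSum (fun i => w i * ‖⟪b i, f⟫‖ ^ 2) (α * ‖f‖ ^ 2) := by
  intro htight
  have hdefect : ∀ f ∈ K, HasSum (fun i => (w i - α) * ‖⟪b i, f⟫‖ ^ 2) 0 := fun f hf => by
    simpa [sub_mul] using (htight f hf).sub ((b.hasSum_norm_sq_inner f).mul_left α)
  rcases le_or_gt L α with hLα | hαL
  · have hbot : K = ⊥ := (Submodule.eq_bot_iff K).2 fun f hf =>
      b.eq_zero_of_hasSum_mul_norm_sq_inner (d := fun i => α - w i)
        (fun i _ => by linarith [hlt i])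
        (by simpa only [neg_zero, ← neg_mul, neg_sub] using (hdefect f hf).neg)
    exact hK (hbot ▸ inferInstance)
  · have hfin : {i | w i ≤ α}.Finite := by
      simpa only [not_lt] using eventually_cofinite.1 (hlim.eventually_const_lt hαL)
    have := hfin.to_subtype
    obtain ⟨f, hfK, hf0, hf⟩ :=
      K.exists_ne_zero_forall_inner_eq_zero hK fun i : {i | w i ≤ α} => b i
    refine hf0 (b.eq_zero_of_hasSum_mul_norm_sq_inner (fun i hi => ?_) (hdefect f hfK))
    by_contra! hiα
    exact hi (hf ⟨i, sub_nonpos.1 hiα⟩)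

end HilbertBasis

end

noncomputable def frameWeight (n : ℕ) : ℝ := 2 - 1 / ((n : ℝ) + 1)

theorem one_le_frameWeight (n : ℕ) : 1 ≤ frameWeight n := by
  have : 1 / ((n : ℝ) + 1) ≤ 1 := div_le_one_of_le₀ (by simp) (by positivity)
  unfold frameWeight; linarith

theorem frameWeight_lt_two (n : ℕ) : frameWeight n < 2 := by
  have : 0 < 1 / ((n : ℝ) + 1) := by positivity
  unfold frameWeight; linarith

theorem tendsto_frameWeight_cofinite : Tendsto frameWeight cofinite (𝓝 2) := by
  rw [Nat.cofinite_eq_atTop]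
  unfold frameWeight
  simpa only [sub_zero] using (tendsto_one_div_add_atTop_nhds_zero_nat (𝕜 := ℝ)).const_sub 2

/-- The frame `φ n = (2 - 1/(n+1))^{1/2} e n` cannot be projected to a tight frame
for any infinite dimensional subspace. -/
theorem example_frame_no_tight_projection
    {H : Type*} [NormedAddCommGroup H] [InnerProductSpace ℂ H] [CompleteSpace H]
    (e : ℕ → H) (he : Orthonormal ℂ e)
    (hspan : (Submodule.span ℂ (Set.range e)).topologicalClosure = ⊤)
    (φ : ℕ → H) (hφ : ∀ n, φ n = ((Real.sqrt (2 - 1 / ((n : ℝ) + 1)) : ℝ) : ℂ) • e n) :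
    (∃ A B : ℝ, 0 < A ∧ A ≤ B ∧ ∀ f : H,
        A * ‖f‖ ^ 2 ≤ ∑' n, ‖(inner ℂ (φ n) f : ℂ)‖ ^ 2 ∧
        ∑' n, ‖(inner ℂ (φ n) f : ℂ)‖ ^ 2 ≤ B * ‖f‖ ^ 2) ∧
    ¬ ∃ (P : H →L[ℂ] H) (α : ℝ), IsIdempotentElem P ∧ IsSelfAdjoint P ∧
        ¬ FiniteDimensional ℂ (LinearMap.range (P : H →ₗ[ℂ] H)) ∧ 0 < α ∧
        ∀ f ∈ LinearMap.range (P : H →ₗ[ℂ] H), ∑' n, ‖(inner ℂ (P (φ n)) f : ℂ)‖ ^ 2 = α * ‖f‖ ^ 2 := by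
  let b : HilbertBasis ℕ ℂ H := HilbertBasis.mk he hspan.ge
  have hb : ∀ n, b n = e n := congrFun (HilbertBasis.coe_mk he _)
  have hw0 : ∀ n, 0 ≤ frameWeight n := fun n => zero_le_one.trans (one_le_frameWeight n)
  have hw2 : ∀ n, frameWeight n ≤ 2 := fun n => (frameWeight_lt_two n).le
  have hφe : ∀ n f, ‖inner ℂ (φ n) f‖ ^ 2 = frameWeight n * ‖inner ℂ (b n) f‖ ^ 2 := fun n f => by
    rw [hφ n, hb n]
    exact norm_inner_ofReal_sqrt_smul_left_sq (hw0 n) _ _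
  refine ⟨⟨1, 2, one_pos, one_le_two, fun f => ?_⟩, ?_⟩
  · simp only [hφe]
    exact b.tsum_mul_norm_sq_inner_mem_Icc zero_le_one one_le_frameWeight hw2 f
  · rintro ⟨P, α, hidem, hsa, hinf, -, htight⟩
    refine b.not_forall_hasSum_mul_norm_sq_inner frameWeight_lt_two tendsto_frameWeight_cofinite
      hinf α fun f hf => ?_
    have hPφ : ∀ n, ‖inner ℂ (P (φ n)) f‖ ^ 2 = frameWeight n * ‖inner ℂ (b n) f‖ ^ 2 := fun n => by
      rw [(IsStarProjection.mk hidem hsa).inner_apply_left_of_mem_range _ hf, hφe]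
    rw [← htight f hf, tsum_congr hPφ]
    exact (b.summable_mul_norm_sq_inner hw0 hw2 f).hasSum
end

section
/- Let (X, μ) be a σ-finite measure space and let φ ∈ L^∞(X, μ) be a function that is not equal to a constant on any set of positive measure (i.e., μ(φ⁻¹({c})) = 0 for every c). If y is in the essential range of φ and B is an open set containing y, then φ⁻¹(B) admits a countably infinite partition into measurable sets each of finite positive measure. -/
/-!
Take open neighbourhoods `B ⊇ V₀ ⊇ V₁ ⊇ ⋯` of `y` shrinking to `{y}`. Every `φ⁻¹(Vₙ)` has
positive measure while their intersection `φ⁻¹{y}` is null, so infinitely many of the disjoint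
shells `φ⁻¹(Vₙ \ Vₙ₊₁)` have positive measure. By σ-finiteness each of them contains a piece of
finite positive measure; the rest of `φ⁻¹(B)` is then spread over these pieces along a partition
of `X` into sets of finite measure.
-/

open MeasureTheory Set Filter Topology Function
open scoped ENNReal

theorem Antitone.pairwise_disjoint_sdiff_succ {X : Type*} {V : ℕ → Set X} (hV : Antitone V) :
    Pairwise (Disjoint on (fun n => V n \ V (n + 1))) :=
  (pairwise_disjoint_on _).2 fun _ _ hmn =>
    disjoint_left.2 fun _ hxm hxn => hxm.2 (hV hmn hxn.1)

namespace MeasureTheory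

variable {X : Type*} [MeasurableSpace X] {μ : Measure X}

theorem infinite_setOf_measure_sdiff_succ_pos {V : ℕ → Set X} (hV : Antitone V)
    (hpos : ∀ n, 0 < μ (V n)) (hnull : μ (⋂ n, V n) = 0) :
    {n | 0 < μ (V n \ V (n + 1))}.Infinite := by
  rw [← Nat.frequently_atTop_iff_infinite]
  intro hshells
  obtain ⟨N, hN⟩ := eventually_atTop.1 hshells
  have hstrip_null : ∀ n ≥ N, μ (V N \ V n) = 0 := by
    refine Nat.le_induction (by simp) fun n hn ih => ?_
    have hshell : μ (V n \ V (n + 1)) = 0 := le_zero_iff.1 (not_lt.1 (hN n hn))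
    refine measure_mono_null (fun x hx => ?_) (measure_union_null ih hshell)
    by_cases hxn : x ∈ V n
    · exact Or.inr ⟨hxn, hx.2⟩
    · exact Or.inl ⟨hx.1, hxn⟩
  have hcover : V N ⊆ (⋂ n, V n) ∪ ⋃ n, V N \ V (N + n) := by
    intro x hx
    by_cases hall : x ∈ ⋂ n, V n
    · exact Or.inl hall
    · obtain ⟨m, hm⟩ := by simpa using hall
      exact Or.inr (mem_iUnion.2 ⟨m, hx, fun h => hm (hV (Nat.le_add_left m N) h)⟩)
  refine (hpos N).ne' (measure_mono_null hcover (measure_union_null hnull ?_))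
  exact measure_iUnion_null fun n => hstrip_null _ (Nat.le_add_right N n)

theorem exists_partition_measure_pos_lt_top [SigmaFinite μ] {S : Set X} (hS : MeasurableSet S)
    {A : ℕ → Set X} (hAm : ∀ n, MeasurableSet (A n)) (hAd : Pairwise (Disjoint on A))
    (hAS : ∀ n, A n ⊆ S) (hA : ∀ n, 0 < μ (A n)) :
    ∃ E : ℕ → Set X, (∀ n, MeasurableSet (E n)) ∧ Pairwise (Disjoint on E) ∧
      ⋃ n, E n = S ∧ ∀ n, 0 < μ (E n) ∧ μ (E n) < ∞ := by
  choose T hTm hTA hTpos hTfin using fun n => Measure.exists_subset_measure_lt_top (hAm n) (hA n)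
  set R := S \ ⋃ n, T n
  set F := disjointed (spanningSets μ)
  have hRT : ∀ m n, Disjoint (R ∩ F m) (T n) :=
    fun m n => disjoint_left.2 fun x hx hxT => hx.1.2 (mem_iUnion.2 ⟨n, hxT⟩)
  refine ⟨fun n => T n ∪ (R ∩ F n), fun n => ?_, fun m n hmn => ?_, ?_, fun n => ⟨?_, ?_⟩⟩
  · exact (hTm n).union ((hS.diff (.iUnion hTm)).inter
      (MeasurableSet.disjointed (measurableSet_spanningSets μ) n))
  · refine disjoint_union_left.2 ⟨disjoint_union_right.2 ⟨?_, (hRT n m).symm⟩,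
      disjoint_union_right.2 ⟨hRT m n, ?_⟩⟩
    · exact (hAd hmn).mono (hTA m) (hTA n)
    · exact (disjoint_disjointed _ hmn).mono inter_subset_right inter_subset_right
  · rw [iUnion_union_distrib, ← inter_iUnion, iUnion_disjointed, iUnion_spanningSets, inter_univ,
      union_sdiff_cancel (iUnion_subset fun n => (hTA n).trans (hAS n))]
  · exact (hTpos n).trans_le (measure_mono subset_union_left)
  · exact (measure_union_le _ _).trans_lt (ENNReal.add_lt_top.2 ⟨hTfin n,
      (measure_mono (inter_subset_right.trans (disjointed_subset _ n))).trans_lt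
        (measure_spanningSets_lt_top μ n)⟩)

theorem exists_pairwise_disjoint_measure_pos_subset_preimage {Y : Type*} [TopologicalSpace Y]
    [T1Space Y] [FirstCountableTopology Y] [MeasurableSpace Y] [OpensMeasurableSpace Y]
    {φ : X → Y} (hφ : Measurable φ) (hfiber : ∀ c, μ (φ ⁻¹' {c}) = 0) {y : Y}
    (hy : ∀ U, IsOpen U → y ∈ U → 0 < μ (φ ⁻¹' U)) {B : Set Y} (hB : IsOpen B) (hyB : y ∈ B) :
    ∃ A : ℕ → Set X, (∀ n, MeasurableSet (A n)) ∧ Pairwise (Disjoint on A) ∧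
      (∀ n, A n ⊆ φ ⁻¹' B) ∧ ∀ n, 0 < μ (A n) := by
  obtain ⟨U, hU, hUbasis⟩ := (nhds_basis_opens y).exists_antitone_subbasis
  set V := fun n => φ ⁻¹' (B ∩ U n)
  have hVanti : Antitone V := fun m n hmn =>
    preimage_mono (inter_subset_inter_right _ (hUbasis.antitone hmn))
  have hVnull : μ (⋂ n, V n) = 0 := by
    refine measure_mono_null ?_ (hfiber y)
    rw [← biInter_basis_nhds hUbasis.toHasBasis]
    simp only [iInter_true, preimage_iInter]
    exact iInter_mono fun n => preimage_mono inter_subset_right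
  have hVm : ∀ n, MeasurableSet (V n) := fun n => hφ (hB.inter (hU n).2).measurableSet
  have hVpos : ∀ n, 0 < μ (V n) := fun n => hy _ (hB.inter (hU n).2) ⟨hyB, (hU n).1⟩
  set e := (infinite_setOf_measure_sdiff_succ_pos hVanti hVpos hVnull).natEmbedding
  refine ⟨fun k => V (e k) \ V (e k + 1), fun k => ?_, ?_, fun k => ?_, fun k => (e k).2⟩
  · exact (hVm _).diff (hVm _)
  · exact hVanti.pairwise_disjoint_sdiff_succ.comp_of_injective
      (Subtype.val_injective.comp e.injective)
  · exact sdiff_subset.trans (preimage_mono inter_subset_left)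

end MeasureTheory

theorem partition_of_preimage_general
    {X : Type*} [MeasurableSpace X] (μ : Measure X) [SigmaFinite μ]
    (φ : X → ℂ) (hmeas : Measurable φ)
    (hconst : ∀ c : ℂ, μ (φ ⁻¹' {c}) = 0)
    (y : ℂ) (hy : ∀ U : Set ℂ, IsOpen U → y ∈ U → 0 < μ (φ ⁻¹' U))
    (B : Set ℂ) (hB : IsOpen B) (hyB : y ∈ B) :
    ∃ E : ℕ → Set X, (∀ n, MeasurableSet (E n)) ∧
      (Pairwise fun m n => Disjoint (E m) (E n)) ∧
      (⋃ n, E n) = φ ⁻¹' B ∧ ∀ n, 0 < μ (E n) ∧ μ (E n) < ⊤ := by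
  obtain ⟨A, hAm, hAd, hAB, hApos⟩ :=
    exists_pairwise_disjoint_measure_pos_subset_preimage hmeas hconst hy hB hyB
  exact exists_partition_measure_pos_lt_top (hmeas hB.measurableSet) hAm hAd hAB hApos

/-- If `φ` is essentially bounded, not constant on any set of positive measure, and `y`
is in the essential range of `φ`, then for any open `B ∋ y` the set `φ⁻¹(B)` admits a
countably infinite partition into sets of finite positive measure. -/
theorem partition_of_preimage
    {X : Type*} [MeasurableSpace X] (μ : Measure X) [SigmaFinite μ]
    (φ : X → ℂ) (hmeas : Measurable φ) (hφ : MemLp φ ⊤ μ)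
    (hconst : ∀ c : ℂ, μ (φ ⁻¹' {c}) = 0)
    (y : ℂ) (hy : ∀ U : Set ℂ, IsOpen U → y ∈ U → 0 < μ (φ ⁻¹' U))
    (B : Set ℂ) (hB : IsOpen B) (hyB : y ∈ B) :
    ∃ E : ℕ → Set X, (∀ n, MeasurableSet (E n)) ∧
      (Pairwise fun m n => Disjoint (E m) (E n)) ∧
      (⋃ n, E n) = φ ⁻¹' B ∧ ∀ n, 0 < μ (E n) ∧ μ (E n) < ⊤ :=
  partition_of_preimage_general μ φ hmeas hconst y hy B hB hyB
end

section
/- Let E be a bounded positive operator on a Hilbert space H, let P be an orthogonal projection with finite dimensional kernel, and suppose P E P = α P for some α ≥ 0. Let V = ran P ∩ ker(E − α·I) and let W be the orthogonal complement of V inside ran P. Then dim W ≤ dim ker P. -/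
/-!
The map `x ↦ (1 - P) (E x)` sends `W` into `ker P = ran (1 - P)`, and it is injective there:
if `(1 - P) (E x) = 0` with `x ∈ ran P`, then `E x = P E P x = α x`, so `x ∈ V ∩ Vᗮ = 0`.
-/

namespace Module.End

open LinearMap

variable {R M : Type*} [CommRing R] [AddCommGroup M] [Module R M]
  {P E : Module.End R M} {c : R}

theorem apply_eq_smul_of_mul_mul_eq_smul (hP : IsIdempotentElem P) (hPEP : P * E * P = c • P)
    {x : M} (hx : x ∈ range P) (hEx : (1 - P) (E x) = 0) : E x = c • x := by
  have hPx : P x = x := hP.mem_range_iff.mp hx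
  calc E x = P (E (P x)) := by rw [hPx, ← sub_eq_zero.mp hEx]; rfl
    _ = (P * E * P) x := rfl
    _ = c • x := by rw [hPEP, LinearMap.smul_apply, hPx]

theorem rank_le_rank_ker_of_mul_mul_eq_smul (hP : IsIdempotentElem P) (hPEP : P * E * P = c • P)
    {W : Submodule R M} (hWP : W ≤ range P) (hWE : Disjoint W (ker (E - c • 1))) :
    Module.rank R W ≤ Module.rank R (ker P) := by
  let f : W →ₗ[R] ker P := (((1 - P) * E).domRestrict W).codRestrict (ker P) fun x => by
    rw [hP.ker_eq_range_one_sub]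
    exact ⟨E x, rfl⟩
  refine rank_le_of_injective f ((injective_iff_map_eq_zero f).mpr fun x hx => ?_)
  have hEx : E x = c • x :=
    apply_eq_smul_of_mul_mul_eq_smul hP hPEP (hWP x.2) (congrArg Subtype.val hx)
  have hxE : (x : M) ∈ ker (E - c • 1) := by simp [hEx]
  exact Subtype.ext (Submodule.disjoint_def.mp hWE x x.2 hxE)

end Module.End

theorem dim_W_le_dim_ker_general
    {H : Type*} [NormedAddCommGroup H] [InnerProductSpace ℂ H]
    (E : H →L[ℂ] H)
    (P : H →L[ℂ] H) (hP : IsIdempotentElem P)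
    (α : ℝ) (hPEP : P ∘L E ∘L P = (α : ℂ) • P)
    (V W : Submodule ℂ H)
    (hV : V = LinearMap.range (P : H →ₗ[ℂ] H) ⊓
      LinearMap.ker ((E - (α : ℂ) • (1 : H →L[ℂ] H) : H →L[ℂ] H) : H →ₗ[ℂ] H))
    (hW : W = LinearMap.range (P : H →ₗ[ℂ] H) ⊓ Vᗮ) :
    Module.rank ℂ W ≤ Module.rank ℂ (LinearMap.ker (P : H →ₗ[ℂ] H)) := by
  have hP' : IsIdempotentElem (P : Module.End ℂ H) := congrArg ContinuousLinearMap.toLinearMap hP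
  have hPEP' : (P : Module.End ℂ H) * E * P = (α : ℂ) • (P : Module.End ℂ H) :=
    congrArg ContinuousLinearMap.toLinearMap hPEP
  have hWE : Disjoint W (LinearMap.ker ((E : Module.End ℂ H) - (α : ℂ) • 1)) := by
    rw [Submodule.disjoint_def]
    intro x hxW hxE
    rw [hW] at hxW
    exact Submodule.disjoint_def.mp V.orthogonal_disjoint x (hV ▸ ⟨hxW.1, hxE⟩) hxW.2
  exact Module.End.rank_le_rank_ker_of_mul_mul_eq_smul hP' hPEP' (hW ▸ inf_le_left) hWE

/-- If `P E P = α P` with `ker P` finite dimensional, then the orthogonal complement,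
inside `ran P`, of `V = ran P ∩ ker (E - α)` has dimension at most `dim ker P`. -/
theorem dim_W_le_dim_ker
    {H : Type*} [NormedAddCommGroup H] [InnerProductSpace ℂ H] [CompleteSpace H]
    (E : H →L[ℂ] H) (hpos : E.IsPositive)
    (P : H →L[ℂ] H) (hP : IsIdempotentElem P) (hPsa : IsSelfAdjoint P)
    (hker : FiniteDimensional ℂ (LinearMap.ker (P : H →ₗ[ℂ] H)))
    (α : ℝ) (hα : 0 ≤ α) (hPEP : P ∘L E ∘L P = (α : ℂ) • P)
    (V W : Submodule ℂ H)
    (hV : V = LinearMap.range (P : H →ₗ[ℂ] H) ⊓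
      LinearMap.ker ((E - (α : ℂ) • (1 : H →L[ℂ] H) : H →L[ℂ] H) : H →ₗ[ℂ] H))
    (hW : W = LinearMap.range (P : H →ₗ[ℂ] H) ⊓ Vᗮ) :
    Module.rank ℂ W ≤ Module.rank ℂ (LinearMap.ker (P : H →ₗ[ℂ] H)) :=
  dim_W_le_dim_ker_general E P hP α hPEP V W hV hW
end

section
/- Let E : L²[0,1) → L²[0,1) be the multiplication operator (Ef)(x) = x·f(x). For i ∈ ℕ let X_i = [2^{-i-1}, 2^{-i}) ∪ [1 − 2^{-i}, 1 − 2^{-i-1}) and f_i = 2^{i/2} χ_{X_i}. Then {f_i} is an orthonormal sequence, and if P is the orthogonal projection onto the closed span of {f_i}, then P E P = (1/2) P. -/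
/-!
The `f i` are normalized indicators of pairwise disjoint sets, hence orthonormal. Each
`X i = [a, 2a) ∪ [1 - 2a, 1 - a)` satisfies `∫_{X i} x = a = |X i| / 2`, so
`⟪f i, E (f j)⟫ = ½ ⟪f i, f j⟫` for all `i, j`. By continuity, `E v - ½ v` is then orthogonal to
the span of the `f i` for every `v` in its closure, i.e. `P` kills it; applied to `v = P g` this
is `P E P g = ½ P g`.
-/

open MeasureTheory Set Submodule ComplexConjugate Function

section Compression

variable {𝕜 E : Type*} [RCLike 𝕜] [NormedAddCommGroup E] [InnerProductSpace 𝕜 E]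

local notation "⟪" x ", " y "⟫" => inner 𝕜 x y

theorem sub_smul_mem_orthogonal_span_of_mem_closure {s : Set E} {T : E →L[𝕜] E} {c : 𝕜}
    (hT : ∀ u ∈ s, ∀ v ∈ s, ⟪u, T v⟫ = c * ⟪u, v⟫) {v : E}
    (hv : v ∈ (span 𝕜 s).topologicalClosure) : T v - c • v ∈ (span 𝕜 s)ᗮ := by
  let S : E →L[𝕜] E := T - c • 1
  have hS : span 𝕜 s ⟂ span 𝕜 (S '' s) := by
    refine isOrtho_span.2 ?_
    rintro u hu _ ⟨w, hw, rfl⟩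
    simp [S, inner_sub_right, inner_smul_right, hT u hu w hw]
  have hsK : span 𝕜 s ≤ (span 𝕜 s)ᗮ.comap (S : E →ₗ[𝕜] E) :=
    span_le.2 fun w hw => hS.ge (subset_span (mem_image_of_mem S hw))
  simpa [S] using
    topologicalClosure_minimal _ hsK ((isClosed_orthogonal _).preimage S.continuous) hv

theorem IsStarProjection.comp_comp_self_eq_smul [CompleteSpace E] {s : Set E}
    {T P : E →L[𝕜] E} {c : 𝕜} (hP : IsStarProjection P)
    (hPs : LinearMap.range (P : E →ₗ[𝕜] E) = (span 𝕜 s).topologicalClosure)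
    (hT : ∀ u ∈ s, ∀ v ∈ s, ⟪u, T v⟫ = c * ⟪u, v⟫) : P ∘L T ∘L P = c • P := by
  obtain ⟨_, hPeq⟩ := isStarProjection_iff_eq_starProjection_range.1 hP
  ext g
  have hPg : P g ∈ (span 𝕜 s).topologicalClosure :=
    hPs ▸ LinearMap.mem_range_self (P : E →ₗ[𝕜] E) g
  have hmem : T (P g) - c • P g ∈ (LinearMap.range (P : E →ₗ[𝕜] E))ᗮ := by
    rw [hPs, orthogonal_closure]
    exact sub_smul_mem_orthogonal_span_of_mem_closure hT hPg
  have hker : P (T (P g) - c • P g) = 0 :=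
    (DFunLike.congr_fun hPeq _).trans ((starProjection_apply_eq_zero_iff _).2 hmem)
  have hPP : P (P g) = P g := congr($(hP.isIdempotentElem) g)
  simpa [sub_eq_zero, hPP] using hker

end Compression

namespace MeasureTheory.L2

variable {α 𝕜 : Type*} [RCLike 𝕜] [MeasurableSpace α] {μ : Measure α}

theorem inner_indicatorConstLp_eq_mul_setIntegral {s t : Set α} (hs : MeasurableSet s)
    (ht : MeasurableSet t) (hμs : μ s ≠ ⊤) (hμt : μ t ≠ ⊤) (a b : 𝕜) (w : α → 𝕜)
    {g : Lp 𝕜 2 μ} (hg : g =ᵐ[μ] fun x => w x * indicatorConstLp 2 ht hμt b x) :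
    inner 𝕜 (indicatorConstLp 2 hs hμs a) g = conj a * b * ∫ x in s ∩ t, w x ∂μ := by
  rw [inner_indicatorConstLp_eq_setIntegral_inner, ← integral_const_mul,
    ← setIntegral_indicator ht]
  refine integral_congr_ae (ae_restrict_of_ae ?_)
  filter_upwards [hg, indicatorConstLp_coeFn (p := 2) (hs := ht) (hμs := hμt) (c := b)]
    with x hgx hx
  by_cases hxt : x ∈ t <;> simp [hgx, hx, hxt, RCLike.inner_apply, mul_comm, mul_left_comm, mul_assoc]

section Family

variable {ι : Type*} {s : ι → Set α} (hs : ∀ i, MeasurableSet (s i)) (hμs : ∀ i, μ (s i) ≠ ⊤)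
  (c : ι → 𝕜)

theorem orthonormal_indicatorConstLp (hdisj : Pairwise (Disjoint on s))
    (hc : ∀ i, ‖c i‖ ^ 2 * μ.real (s i) = 1) :
    Orthonormal 𝕜 fun i => indicatorConstLp 2 (hs i) (hμs i) (c i) := by
  classical
  refine orthonormal_iff_ite.2 fun i j => ?_
  rw [inner_indicatorConstLp_indicatorConstLp (hs i) (hs j) (hμs i) (hμs j)]
  rcases eq_or_ne i j with rfl | hij
  · rw [inter_self, inner_self_eq_norm_sq_to_K, RCLike.real_smul_eq_coe_mul, if_pos rfl]
    exact_mod_cast (mul_comm _ _).trans (hc i)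
  · simp [hij, (hdisj hij).inter_eq]

theorem inner_indicatorConstLp_eq_mul_inner_of_setIntegral_eq
    (hdisj : Pairwise (Disjoint on s)) {w : α → 𝕜} {m : 𝕜}
    (hw : ∀ i, ∫ x in s i, w x ∂μ = m * μ.real (s i)) (i j : ι) {g : Lp 𝕜 2 μ}
    (hg : g =ᵐ[μ] fun x => w x * indicatorConstLp 2 (hs j) (hμs j) (c j) x) :
    inner 𝕜 (indicatorConstLp 2 (hs i) (hμs i) (c i)) g =
      m * inner 𝕜 (indicatorConstLp 2 (hs i) (hμs i) (c i))
        (indicatorConstLp 2 (hs j) (hμs j) (c j)) := by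
  rw [inner_indicatorConstLp_eq_mul_setIntegral _ _ _ _ _ _ _ hg,
    inner_indicatorConstLp_indicatorConstLp (hs i) (hs j) (hμs i) (hμs j)]
  rcases eq_or_ne i j with rfl | hij
  · rw [inter_self, hw, RCLike.conj_mul, inner_self_eq_norm_sq_to_K, RCLike.real_smul_eq_coe_mul]
    ring
  · simp [(hdisj hij).inter_eq]

end Family

end MeasureTheory.L2

def shell (r : ℝ) : Set ℝ := Ico (r / 2) r ∪ Ico (1 - r) (1 - r / 2)

theorem measurableSet_shell (r : ℝ) : MeasurableSet (shell r) :=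
  measurableSet_Ico.union measurableSet_Ico

theorem shell_subset_Ico {r : ℝ} (hr : r ≤ 1) : shell r ⊆ Ico 0 1 := by
  rintro x (⟨_, _⟩ | ⟨_, _⟩) <;> constructor <;> linarith

theorem disjoint_shell {r r' : ℝ} (hr' : r' ≤ r / 2) (hr : r ≤ 1 / 2) :
    Disjoint (shell r) (shell r') := by
  rw [Set.disjoint_left]
  rintro x (⟨_, _⟩ | ⟨_, _⟩) (⟨_, _⟩ | ⟨_, _⟩) <;> linarith

theorem disjoint_Ico_Ico_one_sub {r : ℝ} (hr : r ≤ 1 / 2) :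
    Disjoint (Ico (r / 2) r) (Ico (1 - r) (1 - r / 2)) := by
  rw [Set.disjoint_left]
  rintro x ⟨_, _⟩ ⟨_, _⟩
  linarith

theorem volume_real_shell {r : ℝ} (h0 : 0 ≤ r) (hr : r ≤ 1 / 2) : volume.real (shell r) = r := by
  rw [shell, measureReal_union (disjoint_Ico_Ico_one_sub hr) measurableSet_Ico
    measure_Ico_lt_top.ne measure_Ico_lt_top.ne, Real.volume_real_Ico_of_le (by linarith),
    Real.volume_real_Ico_of_le (by linarith)]
  ring

theorem setIntegral_Ico_id {a b : ℝ} (hab : a ≤ b) : ∫ x in Ico a b, x = (b ^ 2 - a ^ 2) / 2 := by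
  rw [integral_Ico_eq_integral_Ioc, ← intervalIntegral.integral_of_le hab, integral_id]

theorem setIntegral_shell_id {r : ℝ} (h0 : 0 ≤ r) (hr : r ≤ 1 / 2) :
    ∫ x in shell r, x = r / 2 := by
  have hint (a b : ℝ) : IntegrableOn (fun x : ℝ => x) (Ico a b) :=
    continuous_id.integrableOn_Icc.mono_set Ico_subset_Icc_self
  rw [shell, setIntegral_union (disjoint_Ico_Ico_one_sub hr) measurableSet_Ico (hint _ _)
    (hint _ _), setIntegral_Ico_id (by linarith), setIntegral_Ico_id (by linarith)]
  ring

theorem shell_inv_two_pow (i : ℕ) : shell ((2 : ℝ) ^ (i + 1))⁻¹ =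
    Ico ((2 : ℝ) ^ (-(i : ℤ) - 2)) ((2 : ℝ) ^ (-(i : ℤ) - 1)) ∪
      Ico (1 - (2 : ℝ) ^ (-(i : ℤ) - 1)) (1 - (2 : ℝ) ^ (-(i : ℤ) - 2)) := by
  have h1 : (2 : ℝ) ^ (-(i : ℤ) - 1) = ((2 : ℝ) ^ (i + 1))⁻¹ := by
    rw [← zpow_natCast, ← zpow_neg]; push_cast; ring_nf
  have h2 : (2 : ℝ) ^ (-(i : ℤ) - 2) = ((2 : ℝ) ^ (i + 1))⁻¹ / 2 := by
    rw [← h1, div_eq_mul_inv, ← zpow_sub_one₀ two_ne_zero]; ring_nf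
  rw [h1, h2, shell]

theorem inv_two_pow_succ_le_half (i : ℕ) : ((2 : ℝ) ^ (i + 1))⁻¹ ≤ 1 / 2 := by
  rw [one_div]
  exact inv_anti₀ two_pos (le_self_pow₀ one_le_two (by omega))

theorem pairwise_disjoint_shell_inv_two_pow :
    Pairwise (Disjoint on fun i : ℕ => shell ((2 : ℝ) ^ (i + 1))⁻¹) := by
  refine (pairwise_disjoint_on _).2 fun i j hij =>
    disjoint_shell ?_ (inv_two_pow_succ_le_half i)
  rw [← inv_mul_eq_div, ← mul_inv, ← pow_succ']
  exact inv_anti₀ (by positivity) (pow_le_pow_right₀ one_le_two (by omega))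

/-- The multiplication operator by `x` on `L²[0,1)` compressed by the projection onto the
closed span of the normalized indicators of `Xᵢ = [2^{-i-1}, 2^{-i}) ∪ [1-2^{-i}, 1-2^{-i-1})`
equals `(1/2)` times the projection. -/
theorem multiplication_by_x_compression
    (μ : Measure ℝ) (hμ : μ = volume.restrict (Set.Ico (0 : ℝ) 1))
    (E : Lp ℂ 2 μ →L[ℂ] Lp ℂ 2 μ)
    (hE : ∀ f : Lp ℂ 2 μ, (E f : ℝ → ℂ) =ᵐ[μ] fun x => (x : ℂ) * f x)
    (X : ℕ → Set ℝ)
    (hX : ∀ i, X i = Set.Ico ((2 : ℝ) ^ (-(i : ℤ) - 2)) ((2 : ℝ) ^ (-(i : ℤ) - 1)) ∪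
        Set.Ico (1 - (2 : ℝ) ^ (-(i : ℤ) - 1)) (1 - (2 : ℝ) ^ (-(i : ℤ) - 2)))
    (f : ℕ → Lp ℂ 2 μ)
    (hf : ∀ i, (f i : ℝ → ℂ) =ᵐ[μ]
        (X i).indicator fun _ => ((Real.sqrt (2 ^ (i + 1)) : ℝ) : ℂ))
    (P : Lp ℂ 2 μ →L[ℂ] Lp ℂ 2 μ) (hP : IsIdempotentElem P) (hPsa : IsSelfAdjoint P)
    (hrange : LinearMap.range (P : Lp ℂ 2 μ →ₗ[ℂ] Lp ℂ 2 μ) = (Submodule.span ℂ (Set.range f)).topologicalClosure) :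
    Orthonormal ℂ f ∧ P ∘L E ∘L P = (2 : ℂ)⁻¹ • P := by
  subst hμ
  set r : ℕ → ℝ := fun i => ((2 : ℝ) ^ (i + 1))⁻¹
  obtain rfl : X = fun i => shell (r i) :=
    funext fun i => (hX i).trans (shell_inv_two_pow i).symm
  set c : ℕ → ℂ := fun i => ((Real.sqrt (2 ^ (i + 1)) : ℝ) : ℂ)
  obtain rfl : f = fun i => indicatorConstLp 2 (measurableSet_shell (r i)) (measure_ne_top _ _) (c i) :=
    funext fun i => Lp.ext ((hf i).trans indicatorConstLp_coeFn.symm)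
  have hr0 (i : ℕ) : 0 ≤ r i := by positivity
  have hr (i : ℕ) : r i ≤ 1 / 2 := inv_two_pow_succ_le_half i
  have hsub (i : ℕ) : shell (r i) ⊆ Ico 0 1 := shell_subset_Ico (by linarith [hr i])
  have hvol (i : ℕ) : (volume.restrict (Ico (0 : ℝ) 1)).real (shell (r i)) = r i := by
    rw [measureReal_restrict_apply (measurableSet_shell _), inter_eq_left.2 (hsub i),
      volume_real_shell (hr0 i) (hr i)]
  have hmean (i : ℕ) : ∫ x in shell (r i), (x : ℂ) ∂(volume.restrict (Ico (0 : ℝ) 1)) =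
      2⁻¹ * (volume.restrict (Ico (0 : ℝ) 1)).real (shell (r i)) := by
    rw [Measure.restrict_restrict_of_subset (hsub i), integral_complex_ofReal,
      setIntegral_shell_id (hr0 i) (hr i), hvol]
    push_cast; ring
  refine ⟨L2.orthonormal_indicatorConstLp _ _ _ pairwise_disjoint_shell_inv_two_pow fun i => ?_,
    IsStarProjection.comp_comp_self_eq_smul ⟨hP, hPsa⟩ hrange ?_⟩
  · rw [hvol, Complex.norm_real, Real.norm_eq_abs, sq_abs, Real.sq_sqrt (by positivity)]
    exact mul_inv_cancel₀ (by positivity)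
  · rintro _ ⟨i, rfl⟩ _ ⟨j, rfl⟩
    exact L2.inner_indicatorConstLp_eq_mul_inner_of_setIntegral_eq
      (fun i => measurableSet_shell (r i)) (fun _ => measure_ne_top _ _) c
      pairwise_disjoint_shell_inv_two_pow (w := fun x => (x : ℂ)) hmean i j (hE _)
end
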